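/- Let A ⋊_α^σ G be a category crossed product with each A_e an integral domain. Then the commutant of A in A ⋊_α^σ G is the set of Σ_{s∈G} a_s u_s with a_s = 0 whenever σ_s is not an identity map (in particular whenever d(s) ≠ c(s)). Consequently, A is maximal commutative in A ⋊_α^σ G if and only if for every nonidentity morphism s of G, the map σ_s is not an identity map. -/

import Mathlib

open CategoryTheory

/-- The type of morphisms of a category `G`, bundled with domain and codomain. -/
abbrev CMor (G : Type*) [Category G] := Σ e f : G, e ⟶ f

/-- Transport along an equality of objects, as a ring homomorphism. -/
def castRH {G : Type*} (A : G → Type*) [∀ e, Ring (A e)]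
    {e f : G} (h : e = f) : A e →+* A f := by subst h; exact RingHom.id _

/-- The carrier of the category crossed product `A ⋊_α^σ G`: finitely supported
formal sums `Σ_s a_s u_s` with `a_s ∈ A_{c(s)}`. -/
abbrev CP {G : Type*} [Category G] (A : G → Type*) [∀ e, Ring (A e)] :=
  Π₀ p : CMor G, A p.2.1

open Classical in
/-- The multiplication of the category crossed product:
`(a u_s)(b u_t) = a σ_s(b) α(s,t) u_{st}` when `d(s) = c(t)`, else `0`. -/
noncomputable def catMul {G : Type*} [Category G] {A : G → Type*} [∀ e, Ring (A e)]
    (σ : ∀ e f : G, (e ⟶ f) → (A e →+* A f))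
    (α : ∀ e f g : G, (f ⟶ g) → (e ⟶ f) → A g)
    (x y : CP A) : CP A :=
  x.sum fun p a => y.sum fun q b =>
    if h : q.2.1 = p.1 then
      DFinsupp.single (⟨q.1, p.2.1, (q.2.2 ≫ eqToHom h) ≫ p.2.2⟩ : CMor G)
        (a * σ p.1 p.2.1 p.2.2 (castRH A h b) * α q.1 p.1 p.2.1 p.2.2 (q.2.2 ≫ eqToHom h))
    else 0

open Classical in
/-- `a u_s`, the formal sum supported on a single morphism. -/
noncomputable def catSingle {G : Type*} [Category G] {A : G → Type*} [∀ e, Ring (A e)]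
    (p : CMor G) (a : A p.2.1) : CP A := DFinsupp.single p a

/-!
The coefficient of `x · a u_e` at a morphism `s` is `x_s σ_s(a)` if `e = d(s)` and `0`
otherwise, while that of `a u_e · x` is `a x_s` if `e = c(s)` and `0` otherwise, because `α` is
normalized and `σ_e = id`. Taking `a = 1` and `e = d(s)` kills `x_s` unless
`d(s) = c(s)`; for an endomorphism `s`, `x_s σ_s(a) = x_s a` and cancellation in the domain
`A_{c(s)}` force `σ_s = id` as soon as `x_s ≠ 0`. Conversely `u_s` commutes with `A` whenever
`σ_s = id`, which gives the maximality criterion.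
-/

theorem DFinsupp.sum_dite_single_apply {ι : Type*} {β : ι → Type*} [DecidableEq ι]
    [∀ i, AddCommMonoid (β i)] [∀ i (b : β i), Decidable (b ≠ 0)]
    (x : Π₀ i, β i) (C : ι → Prop) [DecidablePred C] (g : ∀ i, β i → C i → β i)
    (hg : ∀ i h, g i 0 h = 0) (r : ι) :
    (x.sum fun i b => if h : C i then single i (g i b h) else 0) r
      = if h : C r then g r (x r) h else 0 := by
  set f : ∀ i, β i → β i := fun i b => if h : C i then g i b h else 0
  have hf : ∀ i, f i 0 = 0 := fun i => by simp only [f, hg, dite_eq_ite, ite_self]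
  have hsummand : ∀ i b, (if h : C i then single i (g i b h) else 0) = single i (f i b) :=
    fun i b => by by_cases h : C i <;> simp [f, h]
  simp only [hsummand]
  rw [← sum_mapRange_index (hf := hf) (fun i => single_zero i), sum_single, mapRange_apply]

@[simp]
lemma castRH_rfl {G : Type*} (A : G → Type*) [∀ e, Ring (A e)] (e : G) :
    castRH A (rfl : e = e) = RingHom.id (A e) := rfl

section
variable {G : Type*} [Category G] {A : G → Type*} [∀ e, Ring (A e)]
  (σ : ∀ e f : G, (e ⟶ f) → (A e →+* A f)) (α : ∀ e f g : G, (f ⟶ g) → (e ⟶ f) → A g)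

open Classical in
lemma catMul_catSingle_id_right (hα1r : ∀ (e f : G) (s : e ⟶ f), α e e f s (𝟙 e) = 1)
    (x : CP A) (e : G) (a : A e) (r : CMor G) :
    catMul σ α x (catSingle ⟨e, e, 𝟙 e⟩ a) r
      = if h : e = r.1 then x r * σ r.1 r.2.1 r.2.2 (castRH A h a) else 0 := by
  have hterm : ∀ (p : CMor G) (b : A p.2.1),
      ((DFinsupp.single (⟨e, e, 𝟙 e⟩ : CMor G) a).sum fun q c =>
        if h : q.2.1 = p.1 then
          DFinsupp.single (⟨q.1, p.2.1, (q.2.2 ≫ eqToHom h) ≫ p.2.2⟩ : CMor G)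
            (b * σ p.1 p.2.1 p.2.2 (castRH A h c) * α q.1 p.1 p.2.1 p.2.2 (q.2.2 ≫ eqToHom h))
        else 0)
      = if h : e = p.1 then (DFinsupp.single p (b * σ p.1 p.2.1 p.2.2 (castRH A h a)) : CP A)
        else 0 := by
    rintro ⟨d, c, s⟩ b
    rw [DFinsupp.sum_single_index (by simp)]
    dsimp only
    split_ifs with h
    · subst h
      rw [eqToHom_refl, Category.id_comp, Category.id_comp]
      simp [hα1r]
    · rfl
  simp only [catMul, catSingle, hterm]
  exact DFinsupp.sum_dite_single_apply x _ _ (fun _ _ => zero_mul _) r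

open Classical in
lemma catMul_catSingle_id_left (hσ1 : ∀ e : G, σ e e (𝟙 e) = RingHom.id (A e))
    (hα1l : ∀ (e f : G) (s : e ⟶ f), α e f f (𝟙 f) s = 1)
    (x : CP A) (e : G) (a : A e) (r : CMor G) :
    catMul σ α (catSingle ⟨e, e, 𝟙 e⟩ a) x r
      = if h : r.2.1 = e then castRH A h.symm a * x r else 0 := by
  have hterm : ∀ (q : CMor G) (c : A q.2.1),
      (if h : q.2.1 = e then
        DFinsupp.single (⟨q.1, e, (q.2.2 ≫ eqToHom h) ≫ 𝟙 e⟩ : CMor G)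
          (a * σ e e (𝟙 e) (castRH A h c) * α q.1 e e (𝟙 e) (q.2.2 ≫ eqToHom h))
      else 0)
      = if h : q.2.1 = e then (DFinsupp.single q (castRH A h.symm a * c) : CP A) else 0 := by
    rintro ⟨d, c, s⟩ b
    dsimp only
    split_ifs with h
    · subst h
      rw [eqToHom_refl, Category.comp_id, Category.comp_id]
      simp [hσ1, hα1l]
    · rfl
  rw [catMul, catSingle, DFinsupp.sum_single_index]
  · simp only [hterm]
    exact DFinsupp.sum_dite_single_apply x _ _ (fun _ _ => mul_zero _) r
  · simp

/-- Membership of `x` in the commutant of `A = ⊕_e A_e u_e`, tested on the homogeneous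
elements `a u_e`. -/
def CommutesWithCoeffs (x : CP A) : Prop :=
  ∀ (e : G) (a : A e),
    catMul σ α x (catSingle ⟨e, e, 𝟙 e⟩ a) = catMul σ α (catSingle ⟨e, e, 𝟙 e⟩ a) x

/-- `σ_s : A_{d(s)} → A_{c(s)}` is an identity map, which only makes sense once
`d(s) = c(s)`; the identity is then the transport `castRH`. -/
def ActsTrivially (p : CMor G) : Prop :=
  ∃ h : p.1 = p.2.1, σ p.1 p.2.1 p.2.2 = castRH A h

end

section
variable {G : Type*} [Category G] {A : G → Type*} [∀ e, CommRing (A e)]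
  [∀ e, NoZeroDivisors (A e)]
  (σ : ∀ e f : G, (e ⟶ f) → (A e →+* A f)) (α : ∀ e f g : G, (f ⟶ g) → (e ⟶ f) → A g)

open Classical in
lemma forall_coeff_commutes_iff (p : CMor G) (b : A p.2.1) :
    (∀ (e : G) (a : A e),
      (if h : e = p.1 then b * σ p.1 p.2.1 p.2.2 (castRH A h a) else 0)
        = if h : p.2.1 = e then castRH A h.symm a * b else 0) ↔
      (b = 0 ∨ ActsTrivially σ p) := by
  obtain ⟨d, c, s⟩ := p
  constructor
  · refine fun hcomm => or_iff_not_imp_left.2 fun hb => ?_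
    by_cases hdc : d = c
    · subst hdc
      refine ⟨rfl, RingHom.ext fun a => mul_left_cancel₀ hb ?_⟩
      have hb_comm := hcomm d a
      simp only [dif_pos, castRH_rfl, RingHom.id_apply] at hb_comm
      exact hb_comm.trans (mul_comm a b)
    · have hb_zero := hcomm d 1
      simp only [dif_pos, dif_neg (Ne.symm hdc), map_one, mul_one] at hb_zero
      exact absurd hb_zero hb
  · rintro (rfl | ⟨hdc, hσ⟩) e a
    · simp
    · dsimp only at hdc hσ
      subst hdc
      by_cases he : e = d
      · subst he
        simp [hσ, mul_comm]
      · simp [he, Ne.symm he]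

theorem commutesWithCoeffs_iff (hσ1 : ∀ e : G, σ e e (𝟙 e) = RingHom.id (A e))
    (hα1r : ∀ (e f : G) (s : e ⟶ f), α e e f s (𝟙 e) = 1)
    (hα1l : ∀ (e f : G) (s : e ⟶ f), α e f f (𝟙 f) s = 1) (x : CP A) :
    CommutesWithCoeffs σ α x ↔ ∀ p, ¬ ActsTrivially σ p → x p = 0 := by
  simp only [CommutesWithCoeffs, DFinsupp.ext_iff, catMul_catSingle_id_right σ α hα1r,
    catMul_catSingle_id_left σ α hσ1 hα1l]
  calc _ ↔ ∀ p : CMor G, ∀ (e : G) (a : A e), _ :=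
        ⟨fun h p e a => h e a p, fun h e a p => h p e a⟩
    _ ↔ ∀ p, x p = 0 ∨ ActsTrivially σ p :=
      forall_congr' fun p => forall_coeff_commutes_iff σ p (x p)
    _ ↔ _ := forall_congr' fun p => or_iff_not_imp_right

theorem maximalCommutative_iff_forall_not_actsTrivially [∀ e, Nontrivial (A e)]
    (hσ1 : ∀ e : G, σ e e (𝟙 e) = RingHom.id (A e))
    (hα1r : ∀ (e f : G) (s : e ⟶ f), α e e f s (𝟙 e) = 1)
    (hα1l : ∀ (e f : G) (s : e ⟶ f), α e f f (𝟙 f) s = 1) :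
    (∀ x, CommutesWithCoeffs σ α x → ∀ p : CMor G, (∀ e, p ≠ ⟨e, e, 𝟙 e⟩) → x p = 0) ↔
      ∀ p : CMor G, (∀ e, p ≠ ⟨e, e, 𝟙 e⟩) → ¬ ActsTrivially σ p := by
  classical
  constructor
  · intro hmax p hp hact
    have hcomm : CommutesWithCoeffs σ α (catSingle p 1) :=
      (commutesWithCoeffs_iff σ α hσ1 hα1r hα1l _).2 fun q hq =>
        DFinsupp.single_eq_of_ne fun hqp => hq (hqp ▸ hact)
    exact one_ne_zero (α := A p.2.1) (by simpa [catSingle] using hmax _ hcomm p hp)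
  · exact fun hnot x hx p hp => (commutesWithCoeffs_iff σ α hσ1 hα1r hα1l x).1 hx p (hnot p hp)

end

theorem commutant_integral_domains_general
    {G : Type*} [CategoryTheory.Category G] {A : G → Type*}
    [∀ e, CommRing (A e)] [∀ e, IsDomain (A e)]
    (σ : ∀ e f : G, (e ⟶ f) → (A e →+* A f))
    (α : ∀ e f g : G, (f ⟶ g) → (e ⟶ f) → A g)
    (hσ1 : ∀ e : G, σ e e (𝟙 e) = RingHom.id (A e))
    (hα1r : ∀ (e f : G) (s : e ⟶ f), α e e f s (𝟙 e) = 1)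
    (hα1l : ∀ (e f : G) (s : e ⟶ f), α e f f (𝟙 f) s = 1) :
    (∀ x : CP A,
      (∀ (e : G) (a : A e),
          catMul σ α x (catSingle (A := A) ⟨e, e, 𝟙 e⟩ a)
            = catMul σ α (catSingle (A := A) ⟨e, e, 𝟙 e⟩ a) x) ↔
        ∀ p : CMor G,
          ¬ (∃ h : p.1 = p.2.1, σ p.1 p.2.1 p.2.2 = castRH A h) → x p = 0) ∧
    ((∀ x : CP A,
        (∀ (e : G) (a : A e),
          catMul σ α x (catSingle (A := A) ⟨e, e, 𝟙 e⟩ a)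
            = catMul σ α (catSingle (A := A) ⟨e, e, 𝟙 e⟩ a) x) →
        ∀ p : CMor G, (∀ e : G, p ≠ ⟨e, e, 𝟙 e⟩) → x p = 0) ↔
      (∀ p : CMor G, (∀ e : G, p ≠ ⟨e, e, 𝟙 e⟩) →
        ¬ ∃ h : p.1 = p.2.1, σ p.1 p.2.1 p.2.2 = castRH A h)) :=
  ⟨commutesWithCoeffs_iff σ α hσ1 hα1r hα1l,
    maximalCommutative_iff_forall_not_actsTrivially σ α hσ1 hα1r hα1l⟩

/-- if each `A_e` is an integral domain, then the commutant of the
coefficient ring `A` in `A ⋊_α^σ G` consists exactly of the elements whose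
coefficient vanishes at every morphism `s` for which `σ_s` is not an identity
map; consequently `A` is maximal commutative iff `σ_s` is not an identity map
for every nonidentity morphism `s`. -/
theorem commutant_integral_domains
    {G : Type*} [CategoryTheory.Category G] {A : G → Type*}
    [∀ e, CommRing (A e)] [∀ e, IsDomain (A e)]
    (σ : ∀ e f : G, (e ⟶ f) → (A e →+* A f))
    (α : ∀ e f g : G, (f ⟶ g) → (e ⟶ f) → A g)
    (hσ1 : ∀ e : G, σ e e (𝟙 e) = RingHom.id (A e))
    (hα1r : ∀ (e f : G) (s : e ⟶ f), α e e f s (𝟙 e) = 1)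
    (hα1l : ∀ (e f : G) (s : e ⟶ f), α e f f (𝟙 f) s = 1)
    (hcoc : ∀ (e f g h : G) (s : g ⟶ h) (t : f ⟶ g) (r : e ⟶ f),
      α f g h s t * α e f h (t ≫ s) r = σ g h s (α e f g t r) * α e g h s (r ≫ t))
    (htw : ∀ (e f g : G) (s : f ⟶ g) (t : e ⟶ f) (a : A e),
      σ f g s (σ e f t a) * α e f g s t = α e f g s t * σ e g (t ≫ s) a) :
    (∀ x : CP A,
      (∀ (e : G) (a : A e),
          catMul σ α x (catSingle (A := A) ⟨e, e, 𝟙 e⟩ a)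
            = catMul σ α (catSingle (A := A) ⟨e, e, 𝟙 e⟩ a) x) ↔
        ∀ p : CMor G,
          ¬ (∃ h : p.1 = p.2.1, σ p.1 p.2.1 p.2.2 = castRH A h) → x p = 0) ∧
    ((∀ x : CP A,
        (∀ (e : G) (a : A e),
          catMul σ α x (catSingle (A := A) ⟨e, e, 𝟙 e⟩ a)
            = catMul σ α (catSingle (A := A) ⟨e, e, 𝟙 e⟩ a) x) →
        ∀ p : CMor G, (∀ e : G, p ≠ ⟨e, e, 𝟙 e⟩) → x p = 0) ↔
      (∀ p : CMor G, (∀ e : G, p ≠ ⟨e, e, 𝟙 e⟩) →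
        ¬ ∃ h : p.1 = p.2.1, σ p.1 p.2.1 p.2.2 = castRH A h)) :=
  commutant_integral_domains_general σ α hσ1 hα1r hα1l
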